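/- Let I, J ≥ 1 be integers, let μ ∈ ℝ^I and β ∈ ℝ^J be probability vectors with all entries strictly positive, let C ∈ ℝ^{I×J}, and let ε > 0, η > ε. For (a,b) ∈ ℝ^I × ℝ^J set D_{ij}(a,b) = exp((a_i + b_j − C_{ij})/ε), ν(b)_j = β_j exp(−b_j/(η−ε)) / Σ_k β_k exp(−b_k/(η−ε)), and F(a,b) = Σ_i μ_i a_i − ε Σ_{i,j} μ_i β_j D_{ij}(a,b) − (η−ε) log(Σ_j β_j exp(−b_j/(η−ε))). Then (a,b) ∈ ℝ^I × ℝ^J is a maximizer of F if and only if for every i: Σ_{j=1}^J β_j D_{ij}(a,b) = 1, and for every j: β_j Σ_{i=1}^I μ_i D_{ij}(a,b) = ν(b)_j. In particular, at any maximizer, Σ_{i,j} μ_i β_j D_{ij}(a,b) = 1. -/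

import Mathlib

open Real BigOperators Finset

/-- `D_{ij}(a,b) = exp((a_i + b_j − C_{ij})/ε)`. -/
noncomputable def Dmat {I J : ℕ} (C : Fin I → Fin J → ℝ) (ε : ℝ)
    (a : Fin I → ℝ) (b : Fin J → ℝ) (i : Fin I) (j : Fin J) : ℝ :=
  Real.exp ((a i + b j - C i j) / ε)

/-- The primal measure recovered from the dual variable `b`: softmax of `−b/(η−ε)`
with prior `β`. -/
noncomputable def nuOf {J : ℕ} (β : Fin J → ℝ) (ε η : ℝ) (b : Fin J → ℝ) (j : Fin J) : ℝ :=
  β j * Real.exp (-b j / (η - ε)) / ∑ k, β k * Real.exp (-b k / (η - ε))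

/-- The dual objective of the regularized Wasserstein estimator problem. -/
noncomputable def Fobj {I J : ℕ} (μ : Fin I → ℝ) (β : Fin J → ℝ)
    (C : Fin I → Fin J → ℝ) (ε η : ℝ) (a : Fin I → ℝ) (b : Fin J → ℝ) : ℝ :=
  ∑ i, μ i * a i - ε * ∑ i, ∑ j, μ i * β j * Dmat C ε a b i j
    - (η - ε) * Real.log (∑ j, β j * Real.exp (-b j / (η - ε)))

/-
`F` is concave: the tangent lines of `exp` bound the entropic term `-ε ∑ μ_i β_j D_ij` from above,
and Jensen's inequality for `exp` with the softmax weights `ν(b)` bounds the log-sum-exp term, so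
that `F (a', b') ≤ F (a, b) + ⟪∇F (a, b), (a' - a, b' - b)⟫`. Hence critical points are global
maximizers; conversely, at a maximizer the derivative of `F` along every line vanishes.
The partial derivatives are `∂F/∂a_i = μ_i (1 - ∑_j β_j D_ij)` and
`∂F/∂b_j = ν(b)_j - β_j ∑_i μ_i D_ij`, whose vanishing is the stated system.
-/

theorem Finset.sum_sum_mul_add {ι κ R : Type*} [Fintype ι] [Fintype κ] [CommSemiring R]
    (W : ι → κ → R) (u : ι → R) (v : κ → R) :
    ∑ i, ∑ j, W i j * (u i + v j) = ∑ i, u i * ∑ j, W i j + ∑ j, v j * ∑ i, W i j := by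
  simp only [mul_add, Finset.sum_add_distrib, Finset.mul_sum]
  rw [Finset.sum_comm (f := fun i j => W i j * v j)]
  congr 1 <;> exact Finset.sum_congr rfl fun _ _ => Finset.sum_congr rfl fun _ _ => mul_comm _ _

theorem Real.exp_mul_sub_add_one_le_exp (x y : ℝ) : exp x * (y - x + 1) ≤ exp y := by
  calc exp x * (y - x + 1) ≤ exp x * exp (y - x) :=
        mul_le_mul_of_nonneg_left (add_one_le_exp _) (exp_pos x).le
    _ = exp y := by rw [← exp_add, add_sub_cancel]

theorem Real.sum_softmax_mul_sub_le_log_sum_exp_sub {ι : Type*} [Fintype ι] [Nonempty ι]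
    {w : ι → ℝ} (hw : ∀ k, 0 < w k) (x y : ι → ℝ) :
    ∑ k, w k * exp (x k) / (∑ l, w l * exp (x l)) * (y k - x k) ≤
      log (∑ k, w k * exp (y k)) - log (∑ k, w k * exp (x k)) := by
  set Z := ∑ l, w l * exp (x l)
  have hZ : 0 < Z := Finset.sum_pos (fun k _ => mul_pos (hw k) (exp_pos _)) univ_nonempty
  have hY : 0 < ∑ k, w k * exp (y k) :=
    Finset.sum_pos (fun k _ => mul_pos (hw k) (exp_pos _)) univ_nonempty
  have jensen := convexOn_exp.map_sum_le (t := univ) (w := fun k => w k * exp (x k) / Z)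
    (p := fun k => y k - x k) (fun k _ => (div_pos (mul_pos (hw k) (exp_pos _)) hZ).le)
    (by rw [← Finset.sum_div, div_self hZ.ne']) (fun _ _ => Set.mem_univ _)
  have hmix : ∑ k, (w k * exp (x k) / Z) • exp (y k - x k) = (∑ k, w k * exp (y k)) / Z := by
    rw [Finset.sum_div]
    refine Finset.sum_congr rfl fun k _ => ?_
    rw [smul_eq_mul, exp_sub]
    field_simp
  rw [hmix, ← le_log_iff_exp_le (by positivity), log_div hY.ne' hZ.ne'] at jensen
  simpa only [smul_eq_mul] using jensen

theorem Dmat_tangent_le {I J : ℕ} (C : Fin I → Fin J → ℝ) {ε : ℝ} (hε : 0 < ε)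
    (a a' : Fin I → ℝ) (b b' : Fin J → ℝ) (i : Fin I) (j : Fin J) :
    ε * Dmat C ε a b i j + Dmat C ε a b i j * (a' i - a i + (b' j - b j)) ≤
      ε * Dmat C ε a' b' i j := by
  have h := mul_le_mul_of_nonneg_left
    (exp_mul_sub_add_one_le_exp ((a i + b j - C i j) / ε) ((a' i + b' j - C i j) / ε)) hε.le
  unfold Dmat
  refine le_of_eq_of_le ?_ h
  field_simp
  ring

namespace Fobj

variable {I J : ℕ} (μ : Fin I → ℝ) (β : Fin J → ℝ) (C : Fin I → Fin J → ℝ)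

noncomputable def gradA (ε : ℝ) (a : Fin I → ℝ) (b : Fin J → ℝ) (i : Fin I) : ℝ :=
  μ i * (1 - ∑ j, β j * Dmat C ε a b i j)

noncomputable def gradB (ε η : ℝ) (a : Fin I → ℝ) (b : Fin J → ℝ) (j : Fin J) : ℝ :=
  nuOf β ε η b j - β j * ∑ i, μ i * Dmat C ε a b i j

theorem sum_mul_gradA_add_sum_mul_gradB (ε η : ℝ) (a da : Fin I → ℝ) (b db : Fin J → ℝ) :
    ∑ i, da i * gradA μ β C ε a b i + ∑ j, db j * gradB μ β C ε η a b j =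
      ∑ i, μ i * da i - ∑ i, ∑ j, μ i * β j * Dmat C ε a b i j * (da i + db j)
        + ∑ j, nuOf β ε η b j * db j := by
  have hrow : ∀ i, ∑ j, μ i * β j * Dmat C ε a b i j = μ i * ∑ j, β j * Dmat C ε a b i j :=
    fun i => by simp only [Finset.mul_sum, mul_assoc]
  have hcol : ∀ j, ∑ i, μ i * β j * Dmat C ε a b i j = β j * ∑ i, μ i * Dmat C ε a b i j :=
    fun j => by simp only [Finset.mul_sum]; exact Finset.sum_congr rfl fun _ _ => by ring
  rw [Finset.sum_sum_mul_add]
  simp only [hrow, hcol, gradA, gradB, mul_sub, mul_one, Finset.sum_sub_distrib]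
  simp only [mul_comm (da _), mul_comm (db _)]
  ring

theorem le_add_gradient [Nonempty (Fin J)] (hμ : ∀ i, 0 ≤ μ i) (hβ : ∀ j, 0 < β j) {ε η : ℝ}
    (hε : 0 < ε) (hεη : ε < η) (a a' : Fin I → ℝ) (b b' : Fin J → ℝ) :
    Fobj μ β C ε η a' b' ≤ Fobj μ β C ε η a b +
      (∑ i, (a' i - a i) * gradA μ β C ε a b i + ∑ j, (b' j - b j) * gradB μ β C ε η a b j) := by
  have hplan : ε * ∑ i, ∑ j, μ i * β j * Dmat C ε a b i j
      + ∑ i, ∑ j, μ i * β j * Dmat C ε a b i j * (a' i - a i + (b' j - b j))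
      ≤ ε * ∑ i, ∑ j, μ i * β j * Dmat C ε a' b' i j := by
    simp only [Finset.mul_sum, ← Finset.sum_add_distrib]
    refine Finset.sum_le_sum fun i _ => Finset.sum_le_sum fun j _ => ?_
    have := mul_le_mul_of_nonneg_left (Dmat_tangent_le C hε a a' b b' i j)
      (mul_nonneg (hμ i) (hβ j).le)
    linarith
  have hηε : 0 < η - ε := sub_pos.2 hεη
  have hlse : (η - ε) * ∑ k, nuOf β ε η b k * (-b' k / (η - ε) - -b k / (η - ε)) ≤
      (η - ε) * (log (∑ k, β k * exp (-b' k / (η - ε))) - log (∑ k, β k * exp (-b k / (η - ε)))) :=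
    mul_le_mul_of_nonneg_left (sum_softmax_mul_sub_le_log_sum_exp_sub hβ _ _) hηε.le
  have hν : (η - ε) * ∑ k, nuOf β ε η b k * (-b' k / (η - ε) - -b k / (η - ε))
      = -∑ k, nuOf β ε η b k * (b' k - b k) := by
    rw [Finset.mul_sum, ← Finset.sum_neg_distrib]
    refine Finset.sum_congr rfl fun k _ => ?_
    field_simp
    ring
  have hμa : ∑ i, μ i * (a' i - a i) = ∑ i, μ i * a' i - ∑ i, μ i * a i := by
    simp only [mul_sub, Finset.sum_sub_distrib]
  rw [sum_mul_gradA_add_sum_mul_gradB μ β C ε η]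
  unfold Fobj
  linarith

theorem hasDerivAt_line [Nonempty (Fin J)] (hβ : ∀ j, 0 < β j) {ε η : ℝ} (hε : ε ≠ 0)
    (hηε : η - ε ≠ 0) (a da : Fin I → ℝ) (b db : Fin J → ℝ) :
    HasDerivAt (fun t : ℝ => Fobj μ β C ε η (a + t • da) (b + t • db))
      (∑ i, da i * gradA μ β C ε a b i + ∑ j, db j * gradB μ β C ε η a b j) 0 := by
  have hline : ∀ x dx : ℝ, HasDerivAt (fun t : ℝ => x + t * dx) dx 0 := fun x dx => by
    simpa using (hasDerivAt_mul_const dx).const_add x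
  have hS : (∑ j, β j * exp (-(b j + 0 * db j) / (η - ε))) ≠ 0 :=
    (Finset.sum_pos (fun j _ => mul_pos (hβ j) (exp_pos _)) univ_nonempty).ne'
  have hlin := HasDerivAt.fun_sum (u := univ) fun i _ => (hline (a i) (da i)).const_mul (μ i)
  have hplan := HasDerivAt.fun_sum (u := univ) fun i _ => HasDerivAt.fun_sum (u := univ) fun j _ =>
    ((((hline (a i) (da i)).fun_add (hline (b j) (db j))).sub_const (C i j)).div_const ε).exp.const_mul
      (μ i * β j)
  have hlog := (HasDerivAt.fun_sum (u := univ) fun j _ =>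
    ((hline (b j) (db j)).fun_neg.div_const (η - ε)).exp.const_mul (β j)).log hS
  rw [sum_mul_gradA_add_sum_mul_gradB μ β C ε η]
  unfold Fobj Dmat
  simp only [Pi.add_apply, Pi.smul_apply, smul_eq_mul]
  refine ((hlin.fun_sub (hplan.const_mul ε)).fun_sub (hlog.const_mul (η - ε))).congr_deriv ?_
  simp only [zero_mul, add_zero]
  have hplan' : ε * ∑ i, ∑ j, μ i * β j * (exp ((a i + b j - C i j) / ε) * ((da i + db j) / ε))
      = ∑ i, ∑ j, μ i * β j * exp ((a i + b j - C i j) / ε) * (da i + db j) := by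
    simp only [Finset.mul_sum]
    exact Finset.sum_congr rfl fun i _ => Finset.sum_congr rfl fun j _ => by field_simp
  have hlog' : (η - ε) * ((∑ j, β j * (exp (-b j / (η - ε)) * (-db j / (η - ε)))) /
      ∑ j, β j * exp (-b j / (η - ε))) = -∑ j, nuOf β ε η b j * db j := by
    rw [Finset.sum_div, Finset.mul_sum, ← Finset.sum_neg_distrib]
    refine Finset.sum_congr rfl fun j _ => ?_
    unfold nuOf
    field_simp
  rw [hplan', hlog']
  ring

theorem isMax_iff_gradient_eq_zero [Nonempty (Fin J)] (hμ : ∀ i, 0 ≤ μ i) (hβ : ∀ j, 0 < β j)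
    {ε η : ℝ} (hε : 0 < ε) (hεη : ε < η) (a : Fin I → ℝ) (b : Fin J → ℝ) :
    (∀ a' b', Fobj μ β C ε η a' b' ≤ Fobj μ β C ε η a b) ↔
      (∀ i, gradA μ β C ε a b i = 0) ∧ (∀ j, gradB μ β C ε η a b j = 0) := by
  constructor
  · intro hmax
    have hdir : ∀ (da : Fin I → ℝ) (db : Fin J → ℝ),
        ∑ i, da i * gradA μ β C ε a b i + ∑ j, db j * gradB μ β C ε η a b j = 0 := fun da db =>
      IsLocalMax.hasDerivAt_eq_zero
        (Filter.Eventually.of_forall fun t => by simpa only [zero_smul, add_zero] using hmax _ _)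
        (hasDerivAt_line μ β C hβ hε.ne' (sub_pos.2 hεη).ne' a da b db)
    refine ⟨fun i => ?_, fun j => ?_⟩
    · simpa [Pi.single_apply] using hdir (Pi.single i 1) 0
    · simpa [Pi.single_apply] using hdir 0 (Pi.single j 1)
  · rintro ⟨hA, hB⟩ a' b'
    simpa [hA, hB] using le_add_gradient μ β C hμ hβ hε hεη a a' b b'

end Fobj

theorem dual_first_order_conditions_general (I J : ℕ) (hJ : 1 ≤ J)
    (μ : Fin I → ℝ) (hμpos : ∀ i, 0 < μ i) (hμsum : ∑ i, μ i = 1)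
    (β : Fin J → ℝ) (hβpos : ∀ j, 0 < β j)
    (C : Fin I → Fin J → ℝ) (ε η : ℝ) (hε : 0 < ε) (hεη : ε < η) :
    (∀ (a : Fin I → ℝ) (b : Fin J → ℝ),
      (∀ (a' : Fin I → ℝ) (b' : Fin J → ℝ), Fobj μ β C ε η a' b' ≤ Fobj μ β C ε η a b) ↔
        ((∀ i, ∑ j, β j * Dmat C ε a b i j = 1) ∧
          (∀ j, β j * ∑ i, μ i * Dmat C ε a b i j = nuOf β ε η b j))) ∧
    (∀ (a : Fin I → ℝ) (b : Fin J → ℝ),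
      (∀ (a' : Fin I → ℝ) (b' : Fin J → ℝ), Fobj μ β C ε η a' b' ≤ Fobj μ β C ε η a b) →
        ∑ i, ∑ j, μ i * β j * Dmat C ε a b i j = 1) := by
  have : Nonempty (Fin J) := Fin.pos_iff_nonempty.mp hJ
  have hcond : ∀ a b, (∀ a' b', Fobj μ β C ε η a' b' ≤ Fobj μ β C ε η a b) ↔
      ((∀ i, ∑ j, β j * Dmat C ε a b i j = 1) ∧
        (∀ j, β j * ∑ i, μ i * Dmat C ε a b i j = nuOf β ε η b j)) := fun a b => by
    rw [Fobj.isMax_iff_gradient_eq_zero μ β C (fun i => (hμpos i).le) hβpos hε hεη]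
    simp only [Fobj.gradA, Fobj.gradB, mul_eq_zero, (hμpos _).ne', false_or, sub_eq_zero,
      eq_comm (a := (1 : ℝ)), eq_comm (a := nuOf β ε η b _)]
  refine ⟨hcond, fun a b hmax => ?_⟩
  calc ∑ i, ∑ j, μ i * β j * Dmat C ε a b i j = ∑ i, μ i * ∑ j, β j * Dmat C ε a b i j := by
        simp only [Finset.mul_sum, mul_assoc]
    _ = 1 := by simp only [((hcond a b).1 hmax).1, mul_one, hμsum]

/-- **first-order optimality conditions.** `(a,b)` maximizes `F` iff
`∑_j β_j D_{ij} = 1` for all `i` and `β_j ∑_i μ_i D_{ij} = ν(b)_j` for all `j`;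
in particular, at any maximizer `∑_{i,j} μ_i β_j D_{ij} = 1`. -/
theorem dual_first_order_conditions (I J : ℕ) (hI : 1 ≤ I) (hJ : 1 ≤ J)
    (μ : Fin I → ℝ) (hμpos : ∀ i, 0 < μ i) (hμsum : ∑ i, μ i = 1)
    (β : Fin J → ℝ) (hβpos : ∀ j, 0 < β j) (hβsum : ∑ j, β j = 1)
    (C : Fin I → Fin J → ℝ) (ε η : ℝ) (hε : 0 < ε) (hεη : ε < η) :
    (∀ (a : Fin I → ℝ) (b : Fin J → ℝ),
      (∀ (a' : Fin I → ℝ) (b' : Fin J → ℝ), Fobj μ β C ε η a' b' ≤ Fobj μ β C ε η a b) ↔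
        ((∀ i, ∑ j, β j * Dmat C ε a b i j = 1) ∧
          (∀ j, β j * ∑ i, μ i * Dmat C ε a b i j = nuOf β ε η b j))) ∧
    (∀ (a : Fin I → ℝ) (b : Fin J → ℝ),
      (∀ (a' : Fin I → ℝ) (b' : Fin J → ℝ), Fobj μ β C ε η a' b' ≤ Fobj μ β C ε η a b) →
        ∑ i, ∑ j, μ i * β j * Dmat C ε a b i j = 1) :=
  dual_first_order_conditions_general I J hJ μ hμpos hμsum β hβpos C ε η hε hεη
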